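/- If a class [C] ∈ 𝔗^U_K is comparable with respect to ≤ both to the class [C_O] and to the class [C_E] (that is, for each of [C_O] and [C_E] there exists an almost ι_K-local map between C and the corresponding complex in at least one direction), then [C] has infinite order in the group 𝔗^U_K. -/

import Mathlib

/-!
Algebraic model for horizontal almost `ι_K`-complexes (Kang–Park,
"Torsion in the knot concordance group and cabling").

Conventions.  We work over `F₂ = ℤ/2`.  A bigraded chain complex of finitely
generated free `F₂[U]`-modules is presented by a finite homogeneous basis
`idx`, a bidegree function `gr : idx → ℤ × ℤ` (Alexander and Maslov gradings),
and a differential matrix `d` over `F₂[U]` (the `j`-th basis vector is sent to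
`∑ i, d i j • eᵢ`; matrix multiplication is composition).  The variable `U`
has bidegree `(−1, −2)` and the differential has bidegree `(0, −1)`.
-/

open Polynomial Matrix Kronecker

noncomputable section

/-- The field with two elements. -/
abbrev F2 : Type := ZMod 2

/-- The ring `F₂[U]`. -/
abbrev PolyU : Type := Polynomial F2

/-- The ring `F₂[U, U⁻¹]`. -/
abbrev Laur : Type := LaurentPolynomial F2

/-- The localization map `F₂[U] → F₂[U, U⁻¹]`. -/
def toL : PolyU →+* Laur := Polynomial.toLaurent

/-- The skew of a bidegree: `(A, M) ↦ (−A, M)`. -/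
def skew (p : ℤ × ℤ) : ℤ × ℤ := (-p.1, p.2)

/-- Data of a bigraded complex of finitely generated free `F₂[U]`-modules. -/
structure CxData where
  idx : Type
  [fintype_idx : Fintype idx]
  [dec_idx : DecidableEq idx]
  gr : idx → ℤ × ℤ
  d : Matrix idx idx PolyU

attribute [instance] CxData.fintype_idx CxData.dec_idx

/-- The `U = 0` (hat-flavored) truncation of a matrix over `F₂[U]`. -/
def hatM {m n : Type} (f : Matrix m n PolyU) : Matrix m n F2 :=
  fun i j => (f i j).coeff 0

/-- `f` is a homogeneous `F₂[U]`-linear map of bidegree `δ` from `C` to `D`: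
a monomial `U^k` appearing in the entry `(i, j)` forces
`gr i + k • (−1, −2) = gr j + δ`. -/
def GradedMap (C D : CxData) (δ : ℤ × ℤ) (f : Matrix D.idx C.idx PolyU) : Prop :=
  ∀ (i : D.idx) (j : C.idx) (k : ℕ), (f i j).coeff k ≠ 0 →
    D.gr i + (-(k : ℤ), -2 * (k : ℤ)) = C.gr j + δ

/-- An element (column vector) of `C` is homogeneous of bidegree `δ`. -/
def Homog (C : CxData) (δ : ℤ × ℤ) (v : Matrix C.idx Unit PolyU) : Prop :=
  ∀ (i : C.idx) (k : ℕ), (v i ()).coeff k ≠ 0 →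
    C.gr i + (-(k : ℤ), -2 * (k : ℤ)) = δ

namespace CxData

/-- `C` is a bigraded chain complex: `∂² = 0` and `∂` has bidegree `(0, −1)`. -/
def IsComplex (C : CxData) : Prop :=
  C.d * C.d = 0 ∧ GradedMap C C (0, -1) C.d

/-- The formal derivative `Φ` of the differential with respect to `U`. -/
def Phi (C : CxData) : Matrix C.idx C.idx PolyU :=
  fun i j => derivative (C.d i j)

/-- The induced differential on the truncation `Ĉ = C/UC`. -/
def dHat (C : CxData) : Matrix C.idx C.idx F2 := hatM C.d

/-- The truncation of `Φ` to `Ĉ`. -/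
def PhiHat (C : CxData) : Matrix C.idx C.idx F2 := hatM C.Phi

/-- The localized differential, over `F₂[U, U⁻¹]`. -/
def dL (C : CxData) : Matrix C.idx C.idx Laur := C.d.map toL

end CxData

/-- Chain homotopy (everything is mod 2) between maps `Ĉ → D̂` of truncations. -/
def HatHomotopic (C D : CxData) (f g : Matrix D.idx C.idx F2) : Prop :=
  ∃ H : Matrix D.idx C.idx F2, f + g = D.dHat * H + H * C.dHat

/-- Chain homotopy between maps `C → D` over `F₂[U]`. -/
def Homotopic (C D : CxData) (f g : Matrix D.idx C.idx PolyU) : Prop :=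
  ∃ H : Matrix D.idx C.idx PolyU, f + g = D.d * H + H * C.d

/-- Chain homotopy between maps `U⁻¹C → U⁻¹D` over `F₂[U, U⁻¹]`. -/
def LHomotopic (C D : CxData) (f g : Matrix D.idx C.idx Laur) : Prop :=
  ∃ H : Matrix D.idx C.idx Laur, f + g = D.dL * H + H * C.dL

/-- A matrix on the truncation `Ĉ` is skew-graded: each nonzero entry takes
bidegree `(A, M)` to `(−A, M)`. -/
def SkewGraded (C : CxData) (f : Matrix C.idx C.idx F2) : Prop :=
  ∀ i j, f i j ≠ 0 → C.gr i = skew (C.gr j)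

/-- `f` is a chain homotopy equivalence of the truncation `Ĉ`. -/
def HatHomotopyEquiv (C : CxData) (f : Matrix C.idx C.idx F2) : Prop :=
  f * C.dHat = C.dHat * f ∧
  ∃ g : Matrix C.idx C.idx F2, g * C.dHat = C.dHat * g ∧
    HatHomotopic C C (g * f) 1 ∧ HatHomotopic C C (f * g) 1

/-- The localization `U⁻¹C` is chain homotopy equivalent to `F₂[U, U⁻¹]`
(one generator, zero differential). -/
def LocalizationTrivial (C : CxData) : Prop :=
  ∃ (f : Matrix Unit C.idx Laur) (g : Matrix C.idx Unit Laur),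
    f * C.dL = 0 ∧ C.dL * g = 0 ∧ f * g = 1 ∧
    ∃ H : Matrix C.idx C.idx Laur, 1 + g * f = C.dL * H + H * C.dL

/-- The homology class of the cycle `x` generates the homology of `U⁻¹C`:
the chain map `F₂[U,U⁻¹] → U⁻¹C` sending the generator to `x` is a chain
homotopy equivalence. -/
def GeneratesLocalHomology (C : CxData) (x : Matrix C.idx Unit PolyU) : Prop :=
  C.dL * x.map toL = 0 ∧
  ∃ p : Matrix Unit C.idx Laur, p * C.dL = 0 ∧ p * x.map toL = 1 ∧
    ∃ H : Matrix C.idx C.idx Laur, 1 + x.map toL * p = C.dL * H + H * C.dL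

/-- A pair as in Definition 2.4: a complex together with an involution of the
hat-flavored truncation. -/
structure Hor where
  C : CxData
  iota : Matrix C.idx C.idx F2

/-- `(C, ι)` is a horizontal almost `ι_K`-complex. -/
def IsHorizontal (X : Hor) : Prop :=
  X.C.IsComplex ∧
  LocalizationTrivial X.C ∧
  HatHomotopyEquiv X.C X.iota ∧
  SkewGraded X.C X.iota ∧
  HatHomotopic X.C X.C (X.C.PhiHat * X.iota * X.C.PhiHat * X.iota)
    (X.iota * X.C.PhiHat * X.iota * X.C.PhiHat) ∧
  HatHomotopic X.C X.C (X.iota * X.iota)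
    (1 + X.C.PhiHat * X.iota * X.C.PhiHat * X.iota) ∧
  ∃ f : Matrix X.C.idx X.C.idx PolyU, f * X.C.d = X.C.d * f ∧
    HatHomotopic X.C X.C (hatM f) (X.iota * X.C.PhiHat * X.iota)

/-- The localization `U⁻¹f` of `f` is a chain homotopy equivalence. -/
def LocalizedHomotopyEquiv (C D : CxData) (f : Matrix D.idx C.idx PolyU) : Prop :=
  ∃ g : Matrix C.idx D.idx Laur,
    g * D.dL = C.dL * g ∧
    LHomotopic C C (g * f.map toL) 1 ∧
    LHomotopic D D (f.map toL * g) 1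

/-- An almost `ι_K`-local map from `(C, ι_C)` to `(D, ι_D)`: a bidegree
preserving `F₂[U]`-linear chain map whose localization is a chain homotopy
equivalence and whose truncation homotopy-commutes with the involutions. -/
def AlmostLocalMap (X Y : Hor) (f : Matrix Y.C.idx X.C.idx PolyU) : Prop :=
  GradedMap X.C Y.C (0, 0) f ∧
  f * X.C.d = Y.C.d * f ∧
  LocalizedHomotopyEquiv X.C Y.C f ∧
  HatHomotopic X.C Y.C (Y.iota * hatM f) (hatM f * X.iota)

/-- `X ≤ Y`: there is an almost `ι_K`-local map from `X` to `Y`. -/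
def Le (X Y : Hor) : Prop := ∃ f, AlmostLocalMap X Y f

/-- Almost `ι_K`-local equivalence. -/
def AlmostLocalEquiv (X Y : Hor) : Prop := Le X Y ∧ Le Y X

/-- The tensor product over `F₂[U]` of two complexes. -/
def tensorCx (C D : CxData) : CxData where
  idx := C.idx × D.idx
  gr := fun p => C.gr p.1 + D.gr p.2
  d := C.d ⊗ₖ (1 : Matrix D.idx D.idx PolyU) + (1 : Matrix C.idx C.idx PolyU) ⊗ₖ D.d

/-- The tensor product of pairs, with `ι_{C⊗D} = ι_C ⊗ ι_D + Φι_C ⊗ ι_D Φ`. -/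
def tensorHor (X Y : Hor) : Hor where
  C := tensorCx X.C Y.C
  iota := X.iota ⊗ₖ Y.iota + (X.C.PhiHat * X.iota) ⊗ₖ (Y.iota * Y.C.PhiHat)

/-- The trivial complex `C_O = F₂[U]`, generator in bidegree `(0,0)`, zero
differential, identity involution. -/
def CO : Hor where
  C := { idx := Unit, gr := fun _ => (0, 0), d := 0 }
  iota := 1

/-- The complex `C_E` of the figure-eight knot: generators `a, b, c, d, x`
(indices `0, 1, 2, 3, 4`), with `a, x` in bidegree `(0,0)`, differential
`∂a = Ub`, `∂c = Ud`, `∂b = ∂d = ∂x = 0`, and involution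
`ι(a) = a + x`, `ι(b) = c`, `ι(c) = b`, `ι(d) = d`, `ι(x) = x + d`. -/
def CE : Hor where
  C := { idx := Fin 5
         gr := ![(0, 0), (1, 1), (-1, 1), (0, 2), (0, 0)]
         d := !![0, 0, 0, 0, 0;
                 Polynomial.X, 0, 0, 0, 0;
                 0, 0, 0, 0, 0;
                 0, 0, Polynomial.X, 0, 0;
                 0, 0, 0, 0, 0] }
  iota := !![1, 0, 0, 0, 0;
             0, 0, 1, 0, 0;
             0, 1, 0, 0, 0;
             0, 0, 0, 1, 1;
             1, 0, 0, 0, 1]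

/-- The complex `C_n`: generators `a_n, b_n, c_n, d_n, x_n` (indices
`0, …, 4`), `a_n, x_n` in bidegree `(0,0)`, differential `∂a_n = Uⁿ b_n`,
`∂c_n = Uⁿ d_n`, and involution `ι(a_n) = a_n + x_n`, `ι(b_n) = c_n`,
`ι(c_n) = b_n`, `ι(d_n) = d_n`, `ι(x_n) = x_n`. -/
def Cn (n : ℕ) : Hor where
  C := { idx := Fin 5
         gr := ![(0, 0), ((n : ℤ), 2 * (n : ℤ) - 1), (-(n : ℤ), 2 * (n : ℤ) - 1),
                 (0, 4 * (n : ℤ) - 2), (0, 0)]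
         d := !![0, 0, 0, 0, 0;
                 Polynomial.X ^ n, 0, 0, 0, 0;
                 0, 0, 0, 0, 0;
                 0, 0, Polynomial.X ^ n, 0, 0;
                 0, 0, 0, 0, 0] }
  iota := !![1, 0, 0, 0, 0;
             0, 0, 1, 0, 0;
             0, 1, 0, 0, 0;
             0, 0, 0, 1, 0;
             1, 0, 0, 0, 1]

/-- The dual complex `C* = Hom_{F₂[U]}(C, F₂[U])`: dual basis, negated
gradings, transposed differential. -/
def dualCx (C : CxData) : CxData where
  idx := C.idx
  gr := fun i => -C.gr i
  d := C.dᵀ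

/-- The dual pair `(C*, ι*)`. -/
def dualHor (X : Hor) : Hor where
  C := dualCx X.C
  iota := X.iotaᵀ

/-- `n`-fold tensor power (`0` gives the trivial complex `C_O`). -/
def tensorPow (X : Hor) : ℕ → Hor
  | 0 => CO
  | n + 1 => tensorHor (tensorPow X n) X

/-- The trace map `tr : C ⊗ C* → F₂[U]`. -/
def trMap (C : CxData) : Matrix Unit (C.idx × C.idx) PolyU :=
  fun _ p => if p.1 = p.2 then 1 else 0

/-- The cotrace map `cotr : F₂[U] → C ⊗ C*`. -/
def cotrMap (C : CxData) : Matrix (C.idx × C.idx) Unit PolyU :=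
  fun p _ => if p.1 = p.2 then 1 else 0


/-!
Tensoring with a fixed complex preserves `≤`, and `C ⊗ C_O` is equivalent to `C`. Hence
`C_O ≤ C` gives `C ≤ C^{⊗2} ≤ ⋯ ≤ C^{⊗n}`, and `C ≤ C_O` gives the reverse chain, so if
`C^{⊗n}` is equivalent to `C_O` then so is `C`. Comparability of `C` with `C_E` would then make
`C_O` comparable with `C_E`, which is impossible: the gradings force a local map between them to
vanish on `b`, `c`, `d`, the involution forces it to vanish on `x`, and `∂a = Ub` kills the
remaining coordinate `a` (of the map or of its inverse after inverting `U`).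
-/

section CharTwo

variable {R : Type} [CommRing R] [Algebra (ZMod 2) R] {m n : Type}

theorem Matrix.add_self_of_zmodTwo (A : Matrix m n R) : A + A = 0 := by
  have h2 : (2 : R) = 0 := by
    rw [← map_ofNat (algebraMap (ZMod 2) R) 2, show (OfNat.ofNat 2 : ZMod 2) = 0 from rfl,
      map_zero]
  ext i j
  simp [← two_mul, h2]

theorem Matrix.eq_of_add_eq_zero_of_zmodTwo {A B : Matrix m n R} (h : A + B = 0) : A = B :=
  (add_eq_zero_iff_eq_neg.mp h).trans (neg_eq_of_add_eq_zero_right (B.add_self_of_zmodTwo))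

end CharTwo

/-- Chain homotopy in characteristic two, where `f - g = f + g`; `HatHomotopic` and
`LHomotopic` unfold to it. -/
def ChainHomotopic {R : Type} [CommRing R] {m n : Type} [Fintype m] [Fintype n]
    (dD : Matrix m m R) (dC : Matrix n n R) (f g : Matrix m n R) : Prop :=
  ∃ H : Matrix m n R, f + g = dD * H + H * dC

namespace ChainHomotopic

variable {R : Type} [CommRing R] {l m n o : Type} [Fintype l] [Fintype m] [Fintype n]
  [Fintype o] {dL : Matrix l l R} {dD : Matrix m m R} {dC : Matrix n n R} {dE : Matrix o o R}
  {f g h : Matrix m n R}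

theorem of_eq [Algebra (ZMod 2) R] (hfg : f = g) : ChainHomotopic dD dC f g :=
  ⟨0, by rw [hfg, g.add_self_of_zmodTwo, Matrix.mul_zero, Matrix.zero_mul, add_zero]⟩

theorem add {f' g' : Matrix m n R} (hfg : ChainHomotopic dD dC f g)
    (hfg' : ChainHomotopic dD dC f' g') : ChainHomotopic dD dC (f + f') (g + g') := by
  obtain ⟨H, hH⟩ := hfg
  obtain ⟨H', hH'⟩ := hfg'
  refine ⟨H + H', ?_⟩
  rw [add_add_add_comm, hH, hH', Matrix.mul_add, Matrix.add_mul]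
  abel

theorem trans [Algebra (ZMod 2) R] (hfg : ChainHomotopic dD dC f g)
    (hgh : ChainHomotopic dD dC g h) : ChainHomotopic dD dC f h := by
  obtain ⟨H, hH⟩ := hfg.add hgh
  refine ⟨H, ?_⟩
  rw [← hH, ← add_assoc, add_assoc f, g.add_self_of_zmodTwo, add_zero]

theorem mul_left {P : Matrix l m R} (hP : P * dD = dL * P) (hfg : ChainHomotopic dD dC f g) :
    ChainHomotopic dL dC (P * f) (P * g) := by
  obtain ⟨H, hH⟩ := hfg
  refine ⟨P * H, ?_⟩
  rw [← Matrix.mul_add, hH, Matrix.mul_add, ← Matrix.mul_assoc, hP, Matrix.mul_assoc,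
    Matrix.mul_assoc]

theorem mul_right {P : Matrix n o R} (hP : dC * P = P * dE) (hfg : ChainHomotopic dD dC f g) :
    ChainHomotopic dD dE (f * P) (g * P) := by
  obtain ⟨H, hH⟩ := hfg
  refine ⟨H * P, ?_⟩
  rw [← Matrix.add_mul, hH, Matrix.add_mul, Matrix.mul_assoc, Matrix.mul_assoc H, hP,
    Matrix.mul_assoc]

theorem eq [Algebra (ZMod 2) R] (hD : dD = 0) (hC : dC = 0) (hfg : ChainHomotopic dD dC f g) :
    f = g := by
  obtain ⟨H, hH⟩ := hfg
  rw [hD, hC, Matrix.zero_mul, Matrix.mul_zero, add_zero] at hH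
  exact Matrix.eq_of_add_eq_zero_of_zmodTwo hH

theorem mul_mul_one_of_one [Algebra (ZMod 2) R] [DecidableEq m] [DecidableEq n]
    {p : Matrix n m R} {u : Matrix m m R} (hp : p * dD = dC * p) (hf : f * dC = dD * f)
    (hu : ChainHomotopic dD dD u 1) (hpf : ChainHomotopic dC dC (p * f) 1) :
    ChainHomotopic dC dC (p * u * f) 1 :=
  ((hu.mul_left hp).mul_right hf.symm).trans (by rwa [Matrix.mul_one])

theorem intertwine_mul [Algebra (ZMod 2) R] {a : Matrix o o R} {b : Matrix m m R}
    {c : Matrix n n R} {g : Matrix o m R} (hg : g * dD = dE * g) (hf : f * dC = dD * f)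
    (hgab : ChainHomotopic dE dD (a * g) (g * b)) (hfbc : ChainHomotopic dD dC (b * f) (f * c)) :
    ChainHomotopic dE dC (a * (g * f)) (g * f * c) := by
  have h := (hgab.mul_right hf.symm).trans
    (by simpa only [Matrix.mul_assoc] using hfbc.mul_left hg)
  simpa only [Matrix.mul_assoc] using h

theorem mul_intertwine [Algebra (ZMod 2) R] {a a' : Matrix m m R} {b b' : Matrix n n R}
    (ha : a * dD = dD * a) (hb' : dC * b' = b' * dC) (hfab : ChainHomotopic dD dC (a * f) (f * b))
    (hfab' : ChainHomotopic dD dC (a' * f) (f * b')) :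
    ChainHomotopic dD dC (a * a' * f) (f * (b * b')) := by
  have h := (hfab'.mul_left ha).trans (by simpa only [Matrix.mul_assoc] using hfab.mul_right hb')
  simpa only [Matrix.mul_assoc] using h

end ChainHomotopic

theorem Matrix.map_kronecker {R S : Type} [CommRing R] [CommRing S] {l m n o : Type} (φ : R →+* S)
    (A : Matrix l m R) (B : Matrix n o R) : (A ⊗ₖ B).map φ = A.map φ ⊗ₖ B.map φ := by
  ext
  simp

section KroneckerSum

variable {R S : Type} [CommRing R] [CommRing S]
  {m n m' n' : Type} [DecidableEq m] [DecidableEq n] [DecidableEq m'] [DecidableEq n']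

def kroneckerSum (A : Matrix m m R) (B : Matrix n n R) : Matrix (m × n) (m × n) R :=
  A ⊗ₖ 1 + 1 ⊗ₖ B

theorem kroneckerSum_map (φ : R →+* S) (A : Matrix m m R) (B : Matrix n n R) :
    (kroneckerSum A B).map φ = kroneckerSum (A.map φ) (B.map φ) := by
  simp [kroneckerSum, Matrix.map_add, Matrix.map_kronecker]

variable [Fintype m] [Fintype n] [Fintype m'] [Fintype n']

theorem kronecker_mul_kroneckerSum {P : Matrix m' m R} {Q : Matrix n' n R} {A : Matrix m m R}
    {A' : Matrix m' m' R} {B : Matrix n n R} {B' : Matrix n' n' R}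
    (hA : P * A = A' * P) (hB : Q * B = B' * Q) :
    (P ⊗ₖ Q) * kroneckerSum A B = kroneckerSum A' B' * (P ⊗ₖ Q) := by
  simp only [kroneckerSum, Matrix.mul_add, Matrix.add_mul, ← mul_kronecker_mul, Matrix.mul_one,
    Matrix.one_mul, hA, hB]

theorem kroneckerSum_mul_self [Algebra (ZMod 2) R] {A : Matrix m m R} {B : Matrix n n R}
    (hA : A * A = 0) (hB : B * B = 0) : kroneckerSum A B * kroneckerSum A B = 0 := by
  simp only [kroneckerSum, Matrix.mul_add, Matrix.add_mul, ← mul_kronecker_mul, Matrix.mul_one,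
    Matrix.one_mul, hA, hB, zero_kronecker, kronecker_zero, zero_add, add_zero]
  exact (A ⊗ₖ B).add_self_of_zmodTwo

theorem ChainHomotopic.kronecker_left [Algebra (ZMod 2) R] {P : Matrix m' m R}
    {A : Matrix m m R} {A' : Matrix m' m' R} {B : Matrix n n R} {B' : Matrix n' n' R}
    {f g : Matrix n' n R} (hP : P * A = A' * P) (hfg : ChainHomotopic B' B f g) :
    ChainHomotopic (kroneckerSum A' B') (kroneckerSum A B) (P ⊗ₖ f) (P ⊗ₖ g) := by
  obtain ⟨H, hH⟩ := hfg
  refine ⟨P ⊗ₖ H, ?_⟩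
  -- the terms `A' P ⊗ H` and `P A ⊗ H` cancel in characteristic two
  simp only [kroneckerSum, Matrix.mul_add, Matrix.add_mul, ← mul_kronecker_mul, Matrix.mul_one,
    Matrix.one_mul, hP, ← kronecker_add, hH]
  rw [add_add_add_comm, Matrix.add_self_of_zmodTwo, zero_add, kronecker_add]

end KroneckerSum

section Truncation

variable {l m n : Type}

theorem hatM_eq_map (f : Matrix m n PolyU) : hatM f = f.map constantCoeff := rfl

theorem hatM_add (A B : Matrix m n PolyU) : hatM (A + B) = hatM A + hatM B :=
  Matrix.map_add constantCoeff (map_add _) A B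

theorem hatM_mul [Fintype m] (A : Matrix l m PolyU) (B : Matrix m n PolyU) :
    hatM (A * B) = hatM A * hatM B :=
  Matrix.map_mul (f := constantCoeff)

theorem hatM_one [DecidableEq m] : hatM (1 : Matrix m m PolyU) = 1 :=
  Matrix.map_one constantCoeff (map_zero _) (map_one _)

theorem map_toL_one [DecidableEq m] : (1 : Matrix m m PolyU).map toL = 1 :=
  Matrix.map_one _ (map_zero _) (map_one _)

theorem Matrix.map_derivative_mul {R : Type} [CommSemiring R] [Fintype m]
    (A : Matrix l m R[X]) (B : Matrix m n R[X]) :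
    (A * B).map derivative = A.map derivative * B + A * B.map derivative := by
  ext i j
  simp [Matrix.mul_apply, Finset.sum_add_distrib]

end Truncation

namespace CxData

variable {C D : CxData}

theorem hatM_mul_dHat {f : Matrix D.idx C.idx PolyU} (hf : f * C.d = D.d * f) :
    hatM f * C.dHat = D.dHat * hatM f := by
  rw [dHat, dHat, ← hatM_mul, ← hatM_mul, hf]

theorem map_toL_mul_dL {f : Matrix D.idx C.idx PolyU} (hf : f * C.d = D.d * f) :
    f.map toL * C.dL = D.dL * f.map toL := by
  rw [dL, dL, ← Matrix.map_mul, ← Matrix.map_mul, hf]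

theorem phiHat_mul_dHat (hC : C.d * C.d = 0) : C.PhiHat * C.dHat = C.dHat * C.PhiHat := by
  have hΦ : C.d.map derivative * C.d = C.d * C.d.map derivative := by
    apply Matrix.eq_of_add_eq_zero_of_zmodTwo
    rw [← Matrix.map_derivative_mul, hC]
    exact Matrix.map_zero _ (map_zero derivative)
  rw [PhiHat, dHat, ← hatM_mul, ← hatM_mul]
  exact congrArg hatM hΦ

/-- `Φ` is natural up to homotopy: differentiating `f ∂ = ∂ f` in `U` gives the homotopy `f'`. -/
theorem hatHomotopic_phiHat_mul_hatM {f : Matrix D.idx C.idx PolyU} (hf : f * C.d = D.d * f) :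
    HatHomotopic C D (D.PhiHat * hatM f) (hatM f * C.PhiHat) := by
  refine ⟨hatM (f.map derivative), ?_⟩
  set f' := f.map derivative
  set dC' := C.d.map derivative
  set dD' := D.d.map derivative
  have hf' : f' * C.d + f * dC' = dD' * f + D.d * f' := by
    simpa only [Matrix.map_derivative_mul] using congrArg (Matrix.map · derivative) hf
  have key : dD' * f + f * dC' = D.d * f' + f' * C.d := by
    apply Matrix.eq_of_add_eq_zero_of_zmodTwo
    rw [show dD' * f + f * dC' + (D.d * f' + f' * C.d) = (f' * C.d + f * dC') + (dD' * f + D.d * f')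
      by abel, hf']
    exact Matrix.add_self_of_zmodTwo _
  rw [PhiHat, PhiHat, dHat, dHat, ← hatM_mul, ← hatM_mul, ← hatM_mul, ← hatM_mul, ← hatM_add,
    ← hatM_add]
  exact congrArg hatM key

end CxData

theorem tensorCx_dHat (C D : CxData) : (tensorCx C D).dHat = kroneckerSum C.dHat D.dHat :=
  kroneckerSum_map (constantCoeff : PolyU →+* F2) C.d D.d

theorem tensorCx_dL (C D : CxData) : (tensorCx C D).dL = kroneckerSum C.dL D.dL :=
  kroneckerSum_map toL C.d D.d

structure Hor.IsChain (X : Hor) : Prop where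
  d_mul_d : X.C.d * X.C.d = 0
  iota_mul_dHat : X.iota * X.C.dHat = X.C.dHat * X.iota

namespace Hor.IsChain

variable {X Y : Hor}

theorem phiHat_iota_mul_dHat (hX : X.IsChain) :
    X.C.PhiHat * X.iota * X.C.dHat = X.C.dHat * (X.C.PhiHat * X.iota) := by
  rw [Matrix.mul_assoc, hX.iota_mul_dHat, ← Matrix.mul_assoc, X.C.phiHat_mul_dHat hX.d_mul_d,
    Matrix.mul_assoc]

theorem iota_phiHat_mul_dHat (hX : X.IsChain) :
    X.iota * X.C.PhiHat * X.C.dHat = X.C.dHat * (X.iota * X.C.PhiHat) := by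
  rw [Matrix.mul_assoc, X.C.phiHat_mul_dHat hX.d_mul_d, ← Matrix.mul_assoc, hX.iota_mul_dHat,
    Matrix.mul_assoc]

theorem tensor (hX : X.IsChain) (hY : Y.IsChain) : (tensorHor X Y).IsChain where
  d_mul_d := kroneckerSum_mul_self hX.d_mul_d hY.d_mul_d
  iota_mul_dHat := by
    have h := congrArg₂ (· + ·)
      (kronecker_mul_kroneckerSum hX.iota_mul_dHat hY.iota_mul_dHat)
      (kronecker_mul_kroneckerSum hX.phiHat_iota_mul_dHat hY.iota_phiHat_mul_dHat)
    rw [← Matrix.add_mul, ← Matrix.mul_add, ← tensorCx_dHat] at h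
    exact h

end Hor.IsChain

theorem IsHorizontal.isChain {X : Hor} (hX : IsHorizontal X) : X.IsChain :=
  ⟨hX.1.1, hX.2.2.1.1⟩

theorem CO_isChain : CO.IsChain where
  d_mul_d := Matrix.mul_zero _
  iota_mul_dHat := (Matrix.one_mul _).trans (Matrix.mul_one _).symm

theorem Hor.IsChain.tensorPow {X : Hor} (hX : X.IsChain) : ∀ n, (tensorPow X n).IsChain
  | 0 => CO_isChain
  | n + 1 => (hX.tensorPow n).tensor hX


theorem GradedMap.mul {C D E : CxData} {δ ε : ℤ × ℤ} {f : Matrix D.idx C.idx PolyU}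
    {g : Matrix E.idx D.idx PolyU} (hf : GradedMap C D δ f) (hg : GradedMap D E ε g) :
    GradedMap C E (δ + ε) (g * f) := by
  intro i j k hk
  rw [Matrix.mul_apply, finsetSum_coeff] at hk
  obtain ⟨a, -, ha⟩ := Finset.exists_ne_zero_of_sum_ne_zero hk
  rw [coeff_mul] at ha
  obtain ⟨⟨x, y⟩, hxy, hne⟩ := Finset.exists_ne_zero_of_sum_ne_zero ha
  rw [Finset.HasAntidiagonal.mem_antidiagonal] at hxy
  subst hxy
  have h1 := hg i a x (left_ne_zero_of_mul hne)
  have h2 := hf a j y (right_ne_zero_of_mul hne)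
  simp only [Prod.ext_iff, Prod.fst_add, Prod.snd_add] at h1 h2 ⊢
  push_cast
  constructor <;> linarith [h1.1, h1.2, h2.1, h2.2]

theorem LocalizedHomotopyEquiv.comp {C D E : CxData} {f : Matrix D.idx C.idx PolyU}
    {g : Matrix E.idx D.idx PolyU} (hf_d : f * C.d = D.d * f) (hg_d : g * D.d = E.d * g)
    (hf : LocalizedHomotopyEquiv C D f) (hg : LocalizedHomotopyEquiv D E g) :
    LocalizedHomotopyEquiv C E (g * f) := by
  obtain ⟨p, hp, hpf, hfp⟩ := hf
  obtain ⟨q, hq, hqg, hgq⟩ := hg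
  have hfL := CxData.map_toL_mul_dL hf_d
  have hgL := CxData.map_toL_mul_dL hg_d
  refine ⟨p * q, ?_, ?_, ?_⟩
  · rw [Matrix.mul_assoc, hq, ← Matrix.mul_assoc, hp, Matrix.mul_assoc]
  · have h := ChainHomotopic.mul_mul_one_of_one hp hfL hqg hpf
    rw [Matrix.map_mul]
    simp only [Matrix.mul_assoc] at h ⊢
    exact h
  · have h := ChainHomotopic.mul_mul_one_of_one hgL hq hfp hgq
    rw [Matrix.map_mul]
    simp only [Matrix.mul_assoc] at h ⊢
    exact h

theorem AlmostLocalMap.comp {X Y Z : Hor} {f : Matrix Y.C.idx X.C.idx PolyU}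
    {g : Matrix Z.C.idx Y.C.idx PolyU} (hf : AlmostLocalMap X Y f) (hg : AlmostLocalMap Y Z g) :
    AlmostLocalMap X Z (g * f) := by
  obtain ⟨hf_gr, hf_d, hf_loc, hf_ι⟩ := hf
  obtain ⟨hg_gr, hg_d, hg_loc, hg_ι⟩ := hg
  refine ⟨by simpa using hf_gr.mul hg_gr, ?_, hf_loc.comp hf_d hg_d hg_loc, ?_⟩
  · rw [Matrix.mul_assoc, hf_d, ← Matrix.mul_assoc, hg_d, Matrix.mul_assoc]
  · rw [hatM_mul]
    exact ChainHomotopic.intertwine_mul (CxData.hatM_mul_dHat hg_d) (CxData.hatM_mul_dHat hf_d)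
      hg_ι hf_ι

theorem Le.trans {X Y Z : Hor} (hXY : Le X Y) (hYZ : Le Y Z) : Le X Z :=
  let ⟨_, hf⟩ := hXY
  let ⟨_, hg⟩ := hYZ
  ⟨_, hf.comp hg⟩

theorem GradedMap.kronecker_one_left {C D : CxData} (Z : CxData) {δ : ℤ × ℤ}
    {f : Matrix D.idx C.idx PolyU} (hf : GradedMap C D δ f) :
    GradedMap (tensorCx Z C) (tensorCx Z D) δ (1 ⊗ₖ f) := by
  rintro ⟨i, a⟩ ⟨j, b⟩ k hk
  rw [kroneckerMap_apply] at hk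
  obtain rfl : i = j := by
    by_contra hij
    simp [Matrix.one_apply_ne hij] at hk
  rw [Matrix.one_apply_eq, one_mul] at hk
  change Z.gr i + D.gr a + _ = Z.gr i + C.gr b + δ
  rw [add_assoc, hf a b k hk, add_assoc]

theorem LocalizedHomotopyEquiv.kronecker_one_left {C D : CxData} (Z : CxData)
    {f : Matrix D.idx C.idx PolyU} (hf : LocalizedHomotopyEquiv C D f) :
    LocalizedHomotopyEquiv (tensorCx Z C) (tensorCx Z D) (1 ⊗ₖ f) := by
  obtain ⟨p, hp, hpf, hfp⟩ := hf
  have hZ : (1 : Matrix Z.idx Z.idx Laur) * Z.dL = Z.dL * 1 := by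
    rw [Matrix.one_mul, Matrix.mul_one]
  have hmap : (1 ⊗ₖ f : Matrix (Z.idx × D.idx) (Z.idx × C.idx) PolyU).map toL =
      1 ⊗ₖ f.map toL := by
    rw [Matrix.map_kronecker, map_toL_one]
  refine ⟨1 ⊗ₖ p, ?_, ?_, ?_⟩
  · rw [tensorCx_dL, tensorCx_dL]
    exact kronecker_mul_kroneckerSum hZ hp
  · have h := ChainHomotopic.kronecker_left hZ hpf
    rw [one_kronecker_one, ← Matrix.one_mul (1 : Matrix Z.idx Z.idx Laur), mul_kronecker_mul,
      ← hmap, ← tensorCx_dL] at h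
    exact h
  · have h := ChainHomotopic.kronecker_left hZ hfp
    rw [one_kronecker_one, ← Matrix.one_mul (1 : Matrix Z.idx Z.idx Laur), mul_kronecker_mul,
      ← hmap, ← tensorCx_dL] at h
    exact h

theorem hatM_one_kronecker {m n p : Type} [DecidableEq m] (f : Matrix n p PolyU) :
    hatM (1 ⊗ₖ f : Matrix (m × n) (m × p) PolyU) = 1 ⊗ₖ hatM f := by
  rw [hatM_eq_map, Matrix.map_kronecker, ← hatM_eq_map, ← hatM_eq_map, hatM_one]

theorem hatHomotopic_iota_phiHat {A B : Hor} {f : Matrix B.C.idx A.C.idx PolyU}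
    (hA : A.C.d * A.C.d = 0) (hB : B.iota * B.C.dHat = B.C.dHat * B.iota)
    (hf_d : f * A.C.d = B.C.d * f)
    (hf_ι : HatHomotopic A.C B.C (B.iota * hatM f) (hatM f * A.iota)) :
    HatHomotopic A.C B.C (B.iota * B.C.PhiHat * hatM f) (hatM f * (A.iota * A.C.PhiHat)) :=
  ChainHomotopic.mul_intertwine hB (A.C.phiHat_mul_dHat hA).symm hf_ι
    (CxData.hatHomotopic_phiHat_mul_hatM hf_d)

theorem AlmostLocalMap.kronecker_one_left {A B Z : Hor} {f : Matrix B.C.idx A.C.idx PolyU}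
    (hZ : Z.IsChain) (hA : A.C.d * A.C.d = 0) (hB : B.iota * B.C.dHat = B.C.dHat * B.iota)
    (hf : AlmostLocalMap A B f) : AlmostLocalMap (tensorHor Z A) (tensorHor Z B) (1 ⊗ₖ f) := by
  obtain ⟨hf_gr, hf_d, hf_loc, hf_ι⟩ := hf
  refine ⟨hf_gr.kronecker_one_left Z.C, ?_, hf_loc.kronecker_one_left Z.C, ?_⟩
  · exact kronecker_mul_kroneckerSum (by rw [Matrix.one_mul, Matrix.mul_one]) hf_d
  · have h := (ChainHomotopic.kronecker_left hZ.iota_mul_dHat hf_ι).add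
      (ChainHomotopic.kronecker_left hZ.phiHat_iota_mul_dHat
        (hatHomotopic_iota_phiHat hA hB hf_d hf_ι))
    have e1 : (Z.iota ⊗ₖ B.iota + (Z.C.PhiHat * Z.iota) ⊗ₖ (B.iota * B.C.PhiHat)) *
        ((1 : Matrix Z.C.idx Z.C.idx F2) ⊗ₖ hatM f) =
        Z.iota ⊗ₖ (B.iota * hatM f) +
          (Z.C.PhiHat * Z.iota) ⊗ₖ (B.iota * B.C.PhiHat * hatM f) := by
      rw [Matrix.add_mul, ← mul_kronecker_mul, ← mul_kronecker_mul, Matrix.mul_one, Matrix.mul_one]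
    have e2 : ((1 : Matrix Z.C.idx Z.C.idx F2) ⊗ₖ hatM f) *
        (Z.iota ⊗ₖ A.iota + (Z.C.PhiHat * Z.iota) ⊗ₖ (A.iota * A.C.PhiHat)) =
        Z.iota ⊗ₖ (hatM f * A.iota) +
          (Z.C.PhiHat * Z.iota) ⊗ₖ (hatM f * (A.iota * A.C.PhiHat)) := by
      rw [Matrix.mul_add, ← mul_kronecker_mul, ← mul_kronecker_mul, Matrix.one_mul, Matrix.one_mul]
    rw [← e1, ← e2, ← hatM_one_kronecker, ← tensorCx_dHat, ← tensorCx_dHat] at h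
    exact h

theorem Le.tensor_left {A B : Hor} (Z : Hor) (hZ : Z.IsChain) (hA : A.C.d * A.C.d = 0)
    (hB : B.iota * B.C.dHat = B.C.dHat * B.iota) (hAB : Le A B) :
    Le (tensorHor Z A) (tensorHor Z B) :=
  let ⟨_, hf⟩ := hAB
  ⟨_, hf.kronecker_one_left hZ hA hB⟩

section PermutationMatrix

variable {R : Type} [CommRing R] {m n : Type} [Fintype m] [DecidableEq n] (e : m ≃ n)

theorem PEquiv.toMatrix_toPEquiv_mul_eq_submatrix_mul [Fintype n] (M : Matrix n n R) :
    (e.toPEquiv.toMatrix : Matrix m n R) * M =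
      M.submatrix e e * (e.toPEquiv.toMatrix : Matrix m n R) := by
  rw [PEquiv.toMatrix_toPEquiv_mul, PEquiv.mul_toMatrix_toPEquiv, Matrix.submatrix_submatrix,
    Equiv.self_comp_symm, Function.comp_id]

theorem PEquiv.toMatrix_toPEquiv_symm_mul [DecidableEq m] :
    (e.symm.toPEquiv.toMatrix : Matrix n m R) * (e.toPEquiv.toMatrix : Matrix m n R) = 1 := by
  rw [← PEquiv.toMatrix_trans, ← Equiv.toPEquiv_trans, Equiv.symm_trans_self, Equiv.toPEquiv_refl,
    PEquiv.toMatrix_refl]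

end PermutationMatrix

section Reindex

variable {X Y : Hor} (e : Y.C.idx ≃ X.C.idx)

theorem AlmostLocalMap.of_reindex (hgr : ∀ i, Y.C.gr i = X.C.gr (e i))
    (hd : Y.C.d = X.C.d.submatrix e e) (hι : Y.iota = X.iota.submatrix e e) :
    AlmostLocalMap X Y e.toPEquiv.toMatrix := by
  refine ⟨?_, ?_, ⟨e.symm.toPEquiv.toMatrix, ?_, ?_, ?_⟩, ?_⟩
  · intro i j k hk
    obtain ⟨rfl, rfl⟩ : e i = j ∧ k = 0 := by
      simp only [PEquiv.toMatrix_apply, Equiv.toPEquiv_apply, Option.mem_def, Option.some.injEq]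
        at hk
      split_ifs at hk with hij
      · exact ⟨hij, by simpa [coeff_one] using hk⟩
      · simp at hk
    simp [hgr]
  · rw [hd, PEquiv.toMatrix_toPEquiv_mul_eq_submatrix_mul e]
  · rw [PEquiv.toMatrix_toPEquiv_mul_eq_submatrix_mul e.symm, CxData.dL, CxData.dL, hd,
      ← Matrix.submatrix_map, Matrix.submatrix_submatrix, Equiv.self_comp_symm,
      Matrix.submatrix_id_id]
  · exact ChainHomotopic.of_eq (by simp [PEquiv.toMatrix_toPEquiv_symm_mul e])
  · exact ChainHomotopic.of_eq (by simpa using PEquiv.toMatrix_toPEquiv_symm_mul e.symm)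
  · exact ChainHomotopic.of_eq
      (by simp [hatM_eq_map, hι, PEquiv.toMatrix_toPEquiv_mul_eq_submatrix_mul e])

theorem almostLocalEquiv_of_reindex (hgr : ∀ i, Y.C.gr i = X.C.gr (e i))
    (hd : ∀ i j, Y.C.d i j = X.C.d (e i) (e j)) (hι : ∀ i j, Y.iota i j = X.iota (e i) (e j)) :
    AlmostLocalEquiv X Y := by
  replace hd : Y.C.d = X.C.d.submatrix e e := Matrix.ext hd
  replace hι : Y.iota = X.iota.submatrix e e := Matrix.ext hι
  have hsymm {α : Type} (M : Matrix X.C.idx X.C.idx α) :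
      M = (M.submatrix e e).submatrix e.symm e.symm := by
    rw [Matrix.submatrix_submatrix, e.self_comp_symm, Matrix.submatrix_id_id]
  refine ⟨⟨_, .of_reindex e hgr hd hι⟩, ⟨_, .of_reindex e.symm (fun j => ?_) ?_ ?_⟩⟩
  · rw [hgr, e.apply_symm_apply]
  · rw [hd, ← hsymm]
  · rw [hι, ← hsymm]

end Reindex

theorem CO_phiHat : CO.C.PhiHat = 0 :=
  Matrix.ext fun _ _ => show (derivative (0 : PolyU)).coeff 0 = 0 by simp

theorem almostLocalEquiv_tensorHor_CO (Z : Hor) : AlmostLocalEquiv Z (tensorHor Z CO) := by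
  refine almostLocalEquiv_of_reindex (Equiv.prodPUnit Z.C.idx) (fun _ => add_zero _) ?_ ?_
  · rintro ⟨i, ⟨⟩⟩ ⟨j, ⟨⟩⟩
    change kroneckerSum Z.C.d (0 : Matrix Unit Unit PolyU) (i, ()) (j, ()) = Z.C.d i j
    simp [kroneckerSum]
  · rintro ⟨i, ⟨⟩⟩ ⟨j, ⟨⟩⟩
    simp only [tensorHor, CO_phiHat, Matrix.mul_zero, kronecker_zero, add_zero, kroneckerMap_apply]
    exact mul_one _

theorem almostLocalEquiv_CO_tensorHor (Z : Hor) : AlmostLocalEquiv Z (tensorHor CO Z) := by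
  refine almostLocalEquiv_of_reindex (Equiv.punitProd Z.C.idx) (fun _ => zero_add _) ?_ ?_
  · rintro ⟨⟨⟩, i⟩ ⟨⟨⟩, j⟩
    change kroneckerSum (0 : Matrix Unit Unit PolyU) Z.C.d ((), i) ((), j) = Z.C.d i j
    simp [kroneckerSum]
  · rintro ⟨⟨⟩, i⟩ ⟨⟨⟩, j⟩
    simp only [tensorHor, CO_phiHat, Matrix.zero_mul, zero_kronecker, add_zero, kroneckerMap_apply]
    exact one_mul _

section TensorPow

variable {X : Hor}

theorem le_tensorPow_succ (hX : X.IsChain) (hOX : Le CO X) (n : ℕ) :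
    Le (tensorPow X n) (tensorPow X (n + 1)) :=
  (almostLocalEquiv_tensorHor_CO _).1.trans
    (hOX.tensor_left _ (hX.tensorPow n) CO_isChain.d_mul_d hX.iota_mul_dHat)

theorem tensorPow_succ_le (hX : X.IsChain) (hXO : Le X CO) (n : ℕ) :
    Le (tensorPow X (n + 1)) (tensorPow X n) :=
  (hXO.tensor_left _ (hX.tensorPow n) hX.d_mul_d CO_isChain.iota_mul_dHat).trans
    (almostLocalEquiv_tensorHor_CO _).2

theorem le_tensorPow (hX : X.IsChain) (hOX : Le CO X) {n : ℕ} (hn : 0 < n) :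
    Le X (tensorPow X n) := by
  induction n, hn using Nat.le_induction with
  | base => exact (almostLocalEquiv_CO_tensorHor X).1
  | succ n _ ih => exact ih.trans (le_tensorPow_succ hX hOX n)

theorem tensorPow_le (hX : X.IsChain) (hXO : Le X CO) {n : ℕ} (hn : 0 < n) :
    Le (tensorPow X n) X := by
  induction n, hn using Nat.le_induction with
  | base => exact (almostLocalEquiv_CO_tensorHor X).2
  | succ n _ ih => exact (tensorPow_succ_le hX hXO n).trans ih

theorem almostLocalEquiv_CO_of_tensorPow (hX : X.IsChain) (hO : Le X CO ∨ Le CO X) {n : ℕ}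
    (hn : 0 < n) (hXn : AlmostLocalEquiv (tensorPow X n) CO) : AlmostLocalEquiv X CO := by
  rcases hO with hXO | hOX
  · exact ⟨hXO, hXn.2.trans (tensorPow_le hX hXO hn)⟩
  · exact ⟨(le_tensorPow hX hOX hn).trans hXn.1, hOX⟩

end TensorPow

section Incomparable

variable {C D : CxData} {δ : ℤ × ℤ} {f : Matrix D.idx C.idx PolyU}

theorem GradedMap.eq_zero (hf : GradedMap C D δ f) {i : D.idx} {j : C.idx}
    (h : ∀ k : ℕ, D.gr i + (-(k : ℤ), -2 * (k : ℤ)) ≠ C.gr j + δ) : f i j = 0 :=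
  Polynomial.ext fun k => by
    rw [coeff_zero]
    exact not_not.mp fun hk => h k (hf i j k hk)

theorem GradedMap.eq_C (hf : GradedMap C D δ f) {i : D.idx} {j : C.idx}
    (h : ∀ k : ℕ, k ≠ 0 → D.gr i + (-(k : ℤ), -2 * (k : ℤ)) ≠ C.gr j + δ) :
    f i j = Polynomial.C (hatM f i j) := by
  refine Polynomial.ext fun k => ?_
  rw [coeff_C]
  split_ifs with hk
  · rw [hk]; rfl
  · exact not_not.mp fun hk' => h k hk (hf i j k hk')

theorem Matrix.mul_ne_one_of_forall_mul_eq_zero {R : Type} [CommRing R] [Nontrivial R]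
    {m n : Type} [Fintype n] [DecidableEq m] {r : Matrix m n R} {c : Matrix n m R} (i : m)
    (h : ∀ j, r i j * c j i = 0) : r * c ≠ 1 := fun hrc => by
  simpa [Matrix.mul_apply, h] using congrFun (congrFun hrc i) i

theorem CO_dHat : CO.C.dHat = 0 := Matrix.ext fun _ _ => coeff_zero 0

theorem CO_dL : CO.C.dL = 0 := Matrix.map_zero _ (map_zero _)

theorem CE_dHat : CE.C.dHat = 0 := by
  ext i j
  fin_cases i <;> fin_cases j <;> simp [CxData.dHat, hatM, CE] <;> rfl

theorem CE_d_mul_apply (v : Matrix CE.C.idx Unit PolyU) :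
    (CE.C.d * v) (1 : Fin 5) () = X * v (0 : Fin 5) () := by
  change ∑ j : Fin 5, CE.C.d (1 : Fin 5) j * v j () = _
  simp [Fin.sum_univ_five, CE]

theorem CE_dL_mul_apply (v : Matrix CE.C.idx Unit Laur) :
    (CE.C.dL * v) (1 : Fin 5) () = LaurentPolynomial.T 1 * v (0 : Fin 5) () := by
  change ∑ j : Fin 5, CE.C.dL (1 : Fin 5) j * v j () = _
  simp [Fin.sum_univ_five, CE, CxData.dL, toL]

theorem CE_iota_mul_apply (v : Matrix CE.C.idx Unit F2) :
    (CE.iota * v) (3 : Fin 5) () = v (3 : Fin 5) () + v (4 : Fin 5) () := by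
  change ∑ j : Fin 5, CE.iota (3 : Fin 5) j * v j () = _
  simp [Fin.sum_univ_five, CE]

theorem mul_CE_iota_apply (r : Matrix Unit CE.C.idx F2) :
    (r * CE.iota) () (0 : Fin 5) = r () (0 : Fin 5) + r () (4 : Fin 5) := by
  change ∑ j : Fin 5, r () j * CE.iota j (0 : Fin 5) = _
  simp [Fin.sum_univ_five, CE]

theorem not_le_CO_CE : ¬ Le CO CE := by
  rintro ⟨f, hf_gr, hf_d, ⟨g, -, hgf, -⟩, hf_ι⟩
  have hι : CE.iota * hatM f = hatM f :=
    (ChainHomotopic.eq CE_dHat CO_dHat hf_ι).trans (Matrix.mul_one _)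
  have ha : f (0 : Fin 5) () = 0 := by
    have h : X * f (0 : Fin 5) () = 0 := (CE_d_mul_apply f).symm.trans
      (congrFun (congrFun (hf_d.symm.trans (Matrix.mul_zero f)) (1 : Fin 5)) ())
    exact (mul_eq_zero.mp h).resolve_left X_ne_zero
  have hb : f (1 : Fin 5) () = 0 := hf_gr.eq_zero fun k => by simp [CE, CO, Prod.ext_iff]; omega
  have hc : f (2 : Fin 5) () = 0 := hf_gr.eq_zero fun k => by simp [CE, CO, Prod.ext_iff]; omega
  have hd : f (3 : Fin 5) () = 0 := hf_gr.eq_zero fun k => by simp [CE, CO, Prod.ext_iff]; omega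
  have hx : f (4 : Fin 5) () = 0 := by
    have h0 : hatM f (4 : Fin 5) () = 0 := add_eq_left.mp
      ((CE_iota_mul_apply (hatM f)).symm.trans (congrFun (congrFun hι (3 : Fin 5)) ()))
    refine (hf_gr.eq_C fun k hk => ?_).trans (by rw [h0, map_zero])
    simpa [CE, CO, Prod.ext_iff] using hk
  refine Matrix.mul_ne_one_of_forall_mul_eq_zero () (fun i => ?_)
    (ChainHomotopic.eq CO_dL CO_dL hgf)
  change g () i * toL (f i ()) = 0
  fin_cases i <;> simp [ha, hb, hc, hd, hx]

theorem not_le_CE_CO : ¬ Le CE CO := by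
  rintro ⟨f, hf_gr, -, ⟨g, hg_d, -, hfg⟩, hf_ι⟩
  have hι : hatM f = hatM f * CE.iota :=
    (Matrix.one_mul _).symm.trans (ChainHomotopic.eq CO_dHat CE_dHat hf_ι)
  have ha : g (0 : Fin 5) () = 0 := by
    have h : LaurentPolynomial.T 1 * g (0 : Fin 5) () = 0 := (CE_dL_mul_apply g).symm.trans
      (congrFun (congrFun ((Matrix.mul_zero g).symm.trans hg_d).symm (1 : Fin 5)) ())
    exact (mul_eq_zero.mp h).resolve_left (LaurentPolynomial.isUnit_T 1).ne_zero
  have hb : f () (1 : Fin 5) = 0 := hf_gr.eq_zero fun k => by simp [CE, CO, Prod.ext_iff]; omega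
  have hc : f () (2 : Fin 5) = 0 := hf_gr.eq_zero fun k => by simp [CE, CO, Prod.ext_iff]; omega
  have hd : f () (3 : Fin 5) = 0 := hf_gr.eq_zero fun k => by simp [CE, CO, Prod.ext_iff]; omega
  have hx : f () (4 : Fin 5) = 0 := by
    have h0 : hatM f () (4 : Fin 5) = 0 :=
      add_eq_left.mp ((mul_CE_iota_apply (hatM f)).symm.trans
        (congrFun (congrFun hι ()) (0 : Fin 5)).symm)
    refine (hf_gr.eq_C fun k hk => ?_).trans (by rw [h0, map_zero])
    simpa [CE, CO, Prod.ext_iff] using hk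
  refine Matrix.mul_ne_one_of_forall_mul_eq_zero () (fun i => ?_)
    (ChainHomotopic.eq CO_dL CO_dL hfg)
  change toL (f () i) * g i () = 0
  fin_cases i <;> simp [ha, hb, hc, hd, hx]

end Incomparable

/-- Corollary 2.15.  If a class `[C] ∈ 𝔗^U_K` is comparable
with respect to `≤` both to `[C_O]` and to `[C_E]`, then `[C]` has infinite
order in `𝔗^U_K`: no positive tensor power of `C` is almost `ι_K`-locally
equivalent to `C_O`. -/
theorem infinite_order_of_comparable (X : Hor) (hX : IsHorizontal X)
    (hO : Le X CO ∨ Le CO X) (hE : Le X CE ∨ Le CE X) :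
    ∀ n : ℕ, 0 < n → ¬ AlmostLocalEquiv (tensorPow X n) CO := by
  intro n hn hXn
  have hXO := almostLocalEquiv_CO_of_tensorPow hX.isChain hO hn hXn
  rcases hE with hXE | hEX
  · exact not_le_CO_CE (hXO.2.trans hXE)
  · exact not_le_CE_CO (hEX.trans hXO.1)

end
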